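/- arXiv:1607.06660 — 2 statements merged into one kernel-verified Lean document; each statement's English description precedes it below -/
import Mathlib

section
/- Let p ≥ 1 and let x < 2^p be a natural number with binary representation x = Σ_{i=0}^{p−1} x_i · 2^(p−i−1), where each x_i ∈ {0,1}. Then for every natural number e, x · 2^e ≡ Σ_{i=0}^{p−1} x_i · 2^((p−i−1+e) mod p) (mod 2^p − 1). -/
/-!
Since `2 ^ p ≡ 1` modulo `2 ^ p - 1`, every power `2 ^ k` is congruent to `2 ^ (k % p)`.
Writing `x < 2 ^ p` in binary and multiplying by `2 ^ e` shifts each bit from position `j`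
to `j + e`, so modulo `2 ^ p - 1` the bits are rotated cyclically by `e` places.
-/

open Finset

namespace Nat

theorem sum_range_div_pow_mod_mul_pow (b x n : ℕ) :
    ∑ j ∈ range n, x / b ^ j % b * b ^ j = x % b ^ n := by
  induction n with
  | zero => simp [Nat.mod_one]
  | succ n ih =>
    rw [sum_range_succ, ih, Nat.pow_succ, Nat.mod_mul]
    ring

theorem pow_modEq_pow_mod {b : ℕ} (hb : 0 < b) (p k : ℕ) :
    b ^ k ≡ b ^ (k % p) [MOD b ^ p - 1] := by
  have hbp : b ^ p ≡ 1 [MOD b ^ p - 1] := Nat.modEq_sub (Nat.one_le_pow _ _ hb)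
  calc b ^ k = b ^ (k % p) * (b ^ p) ^ (k / p) := by rw [← pow_mul, ← pow_add, Nat.mod_add_div]
    _ ≡ b ^ (k % p) * 1 ^ (k / p) [MOD b ^ p - 1] := (hbp.pow _).mul_left _
    _ = b ^ (k % p) := by rw [one_pow, mul_one]

theorem mul_pow_modEq_sum_digits_rotate {b p x : ℕ} (hb : 0 < b) (hx : x < b ^ p) (e : ℕ) :
    x * b ^ e ≡ ∑ j ∈ range p, x / b ^ j % b * b ^ ((j + e) % p) [MOD b ^ p - 1] := by
  have hdigits : x * b ^ e = ∑ j ∈ range p, x / b ^ j % b * b ^ (j + e) := by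
    conv_lhs => rw [← Nat.mod_eq_of_lt hx, ← sum_range_div_pow_mod_mul_pow, sum_mul]
    simp only [pow_add, mul_assoc]
  rw [hdigits]
  exact ModEq.sum fun j _ => (pow_modEq_pow_mod hb p _).mul_left _

end Nat

theorem mul_pow_two_mod_mersenne_bits_general (p x e : ℕ) (hx : x < 2 ^ p) :
    x * 2 ^ e ≡
      ∑ i ∈ Finset.range p, (x / 2 ^ (p - i - 1) % 2) * 2 ^ ((p - i - 1 + e) % p)
      [MOD 2 ^ p - 1] := by
  have hreflect : ∀ i, p - i - 1 = p - 1 - i := fun i => by omega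
  simp only [hreflect]
  rw [sum_range_reflect (fun j => x / 2 ^ j % 2 * 2 ^ ((j + e) % p)) p]
  exact Nat.mul_pow_modEq_sum_digits_rotate two_pos hx e

/-- Let `p ≥ 1` and `x < 2^p` with binary representation
`x = Σ_{i=0}^{p−1} x_i · 2^(p−i−1)` where `x_i = ⌊x / 2^(p−i−1)⌋ mod 2`.
Then for every `e`,
`x · 2^e ≡ Σ_{i=0}^{p−1} x_i · 2^((p−i−1+e) mod p)  (mod 2^p − 1)`. -/
theorem mul_pow_two_mod_mersenne_bits (p x e : ℕ) (hp : 1 ≤ p) (hx : x < 2 ^ p) :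
    x * 2 ^ e ≡
      ∑ i ∈ Finset.range p, (x / 2 ^ (p - i - 1) % 2) * 2 ^ ((p - i - 1 + e) % p)
      [MOD 2 ^ p - 1] :=
  mul_pow_two_mod_mersenne_bits_general p x e hx
end

section
/- Let τ ≥ 1 and let q be an integer with 2^(τ−1) ≤ q ≤ 2^τ. Given blocks B[0],…,B[N−1] with 0 ≤ B[i] ≤ 2^τ − 1, define P'[i] = Σ_{j=0}^{i} B[j]·2^{(i−j)·τ} mod q (with P'[−1] = 0), and define D[i] = 1 if B[i] ≥ q and D[i] = 0 otherwise. Then for every 0 ≤ i < N, B[i] = ((P'[i] − 2^τ · P'[i−1]) mod q) + D[i]·q, where the inner subtraction is taken modulo q with result in {0,…,q−1}. -/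
/-- Prefix fingerprints modulo an arbitrary modulus `q` of a sequence of
`τ`-bit blocks `B`:  `P'[i] = Σ_{j=0}^{i} B[j]·2^((i−j)·τ) mod q`. -/
def prefixFPq (τ q : ℕ) (B : ℕ → ℕ) (i : ℕ) : ℕ :=
  (∑ j ∈ Finset.range (i + 1), B j * 2 ^ ((i - j) * τ)) % q

/-!
The unreduced prefix sums satisfy Horner's recurrence `S[i] = 2^τ · S[i-1] + B[i]`, so
modulo `q` the fingerprint difference `P'[i] − 2^τ · P'[i−1]` recovers `B[i] mod q`.
Since `B[i] < 2^τ ≤ 2 · 2^(τ−1) ≤ 2q`, the block is `B[i] mod q` plus `q` exactly when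
`B[i] ≥ q`.
-/

theorem Finset.sum_range_succ_mul_pow_sub {R : Type*} [CommSemiring R] (b : ℕ → R) (x : R)
    (i : ℕ) :
    ∑ j ∈ Finset.range (i + 2), b j * x ^ (i + 1 - j)
      = x * ∑ j ∈ Finset.range (i + 1), b j * x ^ (i - j) + b (i + 1) := by
  rw [Finset.sum_range_succ, Nat.sub_self, pow_zero, mul_one, Finset.mul_sum]
  congr 1
  refine Finset.sum_congr rfl fun j hj => ?_
  rw [Nat.sub_add_comm (Finset.mem_range_succ_iff.mp hj), pow_succ]
  ring

theorem prefixFPq_modEq (τ q : ℕ) (B : ℕ → ℕ) (i : ℕ) :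
    prefixFPq τ q B i
      ≡ 2 ^ τ * (if i = 0 then 0 else prefixFPq τ q B (i - 1)) + B i [MOD q] := by
  refine Nat.mod_modEq _ q |>.trans ?_
  cases i with
  | zero => simpa using Nat.ModEq.refl _
  | succ i =>
    simp only [prefixFPq, pow_mul', Nat.add_sub_cancel, if_neg i.succ_ne_zero]
    rw [Finset.sum_range_succ_mul_pow_sub]
    exact ((Nat.mod_modEq _ q).symm.mul_left _).add_right _

theorem Nat.add_sub_mod_mod_eq_mod {a b c q : ℕ} (hq : 0 < q) (h : a ≡ b + c [MOD q]) :
    (a + q - b % q) % q = c % q := by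
  have hle : b % q ≤ a + q := (Nat.mod_lt b hq).le.trans (Nat.le_add_left q a)
  refine Nat.ModEq.add_right_cancel' (b % q) ?_
  calc a + q - b % q + b % q = a + q := Nat.sub_add_cancel hle
    _ ≡ a [MOD q] := Nat.add_modEq_right
    _ ≡ b + c [MOD q] := h
    _ ≡ c + b % q [MOD q] := by rw [add_comm]; exact (Nat.mod_modEq b q).symm.add_left c

theorem Nat.lt_two_mul_of_le_two_pow_sub_one {b q τ : ℕ} (hq : 2 ^ (τ - 1) ≤ q)
    (hb : b ≤ 2 ^ τ - 1) : b < 2 * q := by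
  have hpos := Nat.two_pow_pos τ
  have hpow : 2 ^ τ ≤ 2 * 2 ^ (τ - 1) := by
    rw [← pow_succ']
    exact Nat.pow_le_pow_right two_pos (by omega)
  omega

theorem Nat.eq_mod_add_ite_mul_of_lt_two_mul {b q : ℕ} (hb : b < 2 * q) :
    b = b % q + (if q ≤ b then 1 else 0) * q := by
  split_ifs with h
  · rw [Nat.mod_eq_sub_mod h, Nat.mod_eq_of_lt (by omega)]
    omega
  · rw [Nat.mod_eq_of_lt (by omega)]
    simp

theorem block_eq_fp_diff_general_general (τ q N : ℕ)
    (hq1 : 2 ^ (τ - 1) ≤ q)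
    (B : ℕ → ℕ) (hB : ∀ i < N, B i ≤ 2 ^ τ - 1)
    (D : ℕ → ℕ) (hD : ∀ i, D i = if q ≤ B i then 1 else 0)
    (i : ℕ) (hiN : i < N) :
    B i = (prefixFPq τ q B i + q
            - (2 ^ τ * (if i = 0 then 0 else prefixFPq τ q B (i - 1))) % q) % q
          + D i * q := by
  have hq : 0 < q := (Nat.two_pow_pos _).trans_le hq1
  rw [Nat.add_sub_mod_mod_eq_mod hq (prefixFPq_modEq τ q B i), hD i]
  exact Nat.eq_mod_add_ite_mul_of_lt_two_mul (Nat.lt_two_mul_of_le_two_pow_sub_one hq1 (hB i hiN))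

/-- Let `τ ≥ 1` and let `q` be an integer with `2^(τ−1) ≤ q ≤ 2^τ`.  Given
blocks `B[0],…,B[N−1]` with `0 ≤ B[i] ≤ 2^τ − 1`, define
`P'[i] = Σ_{j=0}^{i} B[j]·2^((i−j)·τ) mod q` (with `P'[−1] = 0`) and
`D[i] = 1` if `B[i] ≥ q`, `D[i] = 0` otherwise.  Then for every `0 ≤ i < N`,
`B[i] = ((P'[i] − 2^τ · P'[i−1]) mod q) + D[i]·q`, where the inner subtraction
is taken modulo `q` with result in `{0,…,q−1}`. -/
theorem block_eq_fp_diff_general (τ q N : ℕ) (hτ : 1 ≤ τ)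
    (hq1 : 2 ^ (τ - 1) ≤ q) (hq2 : q ≤ 2 ^ τ)
    (B : ℕ → ℕ) (hB : ∀ i < N, B i ≤ 2 ^ τ - 1)
    (D : ℕ → ℕ) (hD : ∀ i, D i = if q ≤ B i then 1 else 0)
    (i : ℕ) (hiN : i < N) :
    B i = (prefixFPq τ q B i + q
            - (2 ^ τ * (if i = 0 then 0 else prefixFPq τ q B (i - 1))) % q) % q
          + D i * q :=
  block_eq_fp_diff_general_general τ q N hq1 B hB D hD i hiN
end
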